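/- arXiv:1102.1859 — 3 statements merged into one kernel-verified Lean document; each statement's English description precedes it below -/
import Mathlib

section
/- For every finite simple graph G, the critical difference equals the critical independence difference: d_c(G) = id_c(G), i.e., max{d(X) : X ⊆ V} = max{d(I) : I ⊆ V, I independent}. -/
open Finset

namespace CritGraph

variable {V : Type*} [Fintype V] [DecidableEq V]

/-- The neighborhood of a set of vertices `X`:
all vertices having at least one neighbor in `X`. -/
def nbhd (G : SimpleGraph V) [DecidableRel G.Adj] (X : Finset V) : Finset V :=
  univ.filter fun v => ∃ x ∈ X, G.Adj v x

/-- The difference `d(X) = |X| - |N(X)|` of a set of vertices `X`. -/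
def diff (G : SimpleGraph V) [DecidableRel G.Adj] (X : Finset V) : ℤ :=
  (X.card : ℤ) - ((nbhd G X).card : ℤ)

/-- A set of vertices is independent if no two of its vertices are adjacent. -/
def IsIndep (G : SimpleGraph V) (S : Finset V) : Prop :=
  ∀ u ∈ S, ∀ v ∈ S, ¬ G.Adj u v

instance (G : SimpleGraph V) [DecidableRel G.Adj] : DecidablePred (IsIndep G) := fun S =>
  inferInstanceAs (Decidable (∀ u ∈ S, ∀ v ∈ S, ¬ G.Adj u v))

/-- The critical difference `d_c(G) = max {d(X) : X ⊆ V}`. -/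
def dC (G : SimpleGraph V) [DecidableRel G.Adj] : ℤ :=
  (univ : Finset V).powerset.sup' (Finset.powerset_nonempty _) (diff G)

/-- The critical independence difference `id_c(G) = max {d(I) : I independent}`. -/
def idC (G : SimpleGraph V) [DecidableRel G.Adj] : ℤ :=
  ((univ : Finset V).powerset.filter (IsIndep G)).sup'
    ⟨∅, by simp [IsIndep]⟩ (diff G)

/-- `A` is a critical independent set: `A` is independent and
`d(A) = max {d(I) : I independent}`. -/
def IsCritIndep (G : SimpleGraph V) [DecidableRel G.Adj] (A : Finset V) : Prop :=
  IsIndep G A ∧ ∀ I : Finset V, IsIndep G I → diff G I ≤ diff G A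

instance (G : SimpleGraph V) [DecidableRel G.Adj] : DecidablePred (IsCritIndep G) := fun A =>
  inferInstanceAs (Decidable (IsIndep G A ∧ ∀ I : Finset V, IsIndep G I → diff G I ≤ diff G A))

/-- `ker(G)`: the intersection of all critical independent sets of `G`. -/
def kerG (G : SimpleGraph V) [DecidableRel G.Adj] : Finset V :=
  univ.filter fun v => ∀ A : Finset V, IsCritIndep G A → v ∈ A

/-- `G - v`: the induced subgraph of `G` on `V \ {v}`. -/
def deleteVert (G : SimpleGraph V) (v : V) : SimpleGraph {u : V // u ≠ v} :=
  G.comap Subtype.val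

instance (G : SimpleGraph V) (v : V) [DecidableRel G.Adj] :
    DecidableRel (deleteVert G v).Adj := fun a b =>
  inferInstanceAs (Decidable (G.Adj a.val b.val))

/-- `S` is an inclusion-minimal independent set with positive difference. -/
def MinPosIndep (G : SimpleGraph V) [DecidableRel G.Adj] (S : Finset V) : Prop :=
  IsIndep G S ∧ 0 < diff G S ∧ ∀ S' ⊂ S, ¬ (IsIndep G S' ∧ 0 < diff G S')

/-- `S` is a maximum independent set. -/
def IsMaxIndep (G : SimpleGraph V) (S : Finset V) : Prop :=
  IsIndep G S ∧ ∀ I : Finset V, IsIndep G I → I.card ≤ S.card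

instance (G : SimpleGraph V) [DecidableRel G.Adj] : DecidablePred (IsMaxIndep G) := fun S =>
  inferInstanceAs (Decidable (IsIndep G S ∧ ∀ I : Finset V, IsIndep G I → I.card ≤ S.card))

/-- `core(G)`: the intersection of all maximum independent sets of `G`. -/
def coreG (G : SimpleGraph V) [DecidableRel G.Adj] : Finset V :=
  univ.filter fun v => ∀ A : Finset V, IsMaxIndep G A → v ∈ A


lemma mem_nbhd {G : SimpleGraph V} [DecidableRel G.Adj] {X : Finset V} {v : V} :
    v ∈ nbhd G X ↔ ∃ x ∈ X, G.Adj v x := by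
  simp [nbhd]

lemma indep_sdiff_nbhd (G : SimpleGraph V) [DecidableRel G.Adj] (X : Finset V) :
    IsIndep G (X \ nbhd G X) := by
  intro u hu v hv hadj
  rcases mem_sdiff.mp hu with ⟨huX, hun⟩
  rcases mem_sdiff.mp hv with ⟨hvX, _⟩
  exact hun (mem_nbhd.mpr ⟨v, hvX, hadj⟩)

lemma diff_le_sdiff_nbhd (G : SimpleGraph V) [DecidableRel G.Adj] (X : Finset V) :
    diff G X ≤ diff G (X \ nbhd G X) := by
  set Y := X \ nbhd G X with hY
  set A := X ∩ nbhd G X with hA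
  have hcard : Y.card + A.card = X.card := by
    rw [hY, hA]; exact card_sdiff_add_card_inter X (nbhd G X)
  -- N(Y) ∪ A ⊆ N(X), disjointly
  have hNY : nbhd G Y ⊆ nbhd G X := by
    intro v hv
    rcases mem_nbhd.mp hv with ⟨y, hy, hadj⟩
    exact mem_nbhd.mpr ⟨y, (mem_sdiff.mp hy).1, hadj⟩
  have hAX : A ⊆ nbhd G X := fun v hv => (mem_inter.mp hv).2
  have hdisj : Disjoint (nbhd G Y) A := by
    rw [Finset.disjoint_left]
    intro v hv hvA
    rcases mem_nbhd.mp hv with ⟨y, hy, hadj⟩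
    rcases mem_sdiff.mp hy with ⟨hyX, hyn⟩
    exact hyn (mem_nbhd.mpr ⟨v, (mem_inter.mp hvA).1, hadj.symm⟩)
  have hle : (nbhd G Y).card + A.card ≤ (nbhd G X).card := by
    rw [← card_union_of_disjoint hdisj]
    exact card_le_card (union_subset hNY hAX)
  unfold diff
  push_cast [← hcard]
  omega

/-- Zhang: the critical difference equals the critical independence difference. -/
theorem critical_diff_eq_indep_critical_diff (G : SimpleGraph V) [DecidableRel G.Adj] :
    dC G = idC G := by
  apply le_antisymm
  · apply Finset.sup'_le
    intro X _
    calc diff G X ≤ diff G (X \ nbhd G X) := diff_le_sdiff_nbhd G X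
      _ ≤ idC G := by
        apply Finset.le_sup'
        simp only [mem_filter, mem_powerset]
        exact ⟨subset_univ _, indep_sdiff_nbhd G X⟩
  · apply Finset.sup'_le
    intro I _
    exact Finset.le_sup' (diff G) (mem_powerset.mpr (subset_univ I))

end CritGraph
end

section
/- Let G be a finite simple graph and A a critical independent set of G. If there is no nonempty set B ⊆ N(A) with |N(B) ∩ A| = |B|, then for each v ∈ A there exists a matching from N(A) into A \ {v}; conversely, if for each v ∈ A such a matching exists, then there is no nonempty B ⊆ N(A) with |N(B) ∩ A| = |B|. -/
/-!
Criticality of `A` gives Hall's condition `|B| ≤ |N(B) ∩ A|` for every `B ⊆ N(A)`. Forbidding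
one target `v` lowers `|N(B) ∩ A|` by at most one, so Hall's condition for `N(A)` into `A \ {v}`
holds for all `v` exactly when every nonempty `B` has a strict surplus, i.e. no tight set exists;
for a tight `B`, taking `v` adjacent to `B` leaves only `|B| - 1` targets.
-/

open Finset

namespace CritGraph

variable {V : Type*} [Fintype V] [DecidableEq V]

omit [DecidableEq V] in
@[simp]
def IsMatchingInto (G : SimpleGraph V) (S T : Finset V) (f : V → V) : Prop :=
  Set.InjOn f S ∧ ∀ u ∈ S, f u ∈ T ∧ G.Adj u (f u)

omit [Fintype V] [DecidableEq V] in
lemma IsMatchingInto.mono {G : SimpleGraph V} {S S' T : Finset V} {f : V → V}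
    (hf : IsMatchingInto G S T f) (hS : S' ⊆ S) : IsMatchingInto G S' T f :=
  ⟨hf.1.mono (by exact_mod_cast hS), fun u hu => hf.2 u (hS hu)⟩

lemma IsMatchingInto.card_le {G : SimpleGraph V} [DecidableRel G.Adj] {S T : Finset V}
    {f : V → V} (hf : IsMatchingInto G S T f) : S.card ≤ (nbhd G S ∩ T).card := by
  have himage : S.image f ⊆ nbhd G S ∩ T := by
    simp only [subset_iff, mem_image, mem_inter, mem_nbhd]
    rintro _ ⟨u, hu, rfl⟩
    exact ⟨⟨u, hu, (hf.2 u hu).2.symm⟩, (hf.2 u hu).1⟩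
  calc S.card = (S.image f).card := (card_image_of_injOn hf.1).symm
    _ ≤ (nbhd G S ∩ T).card := card_le_card himage

/-- Hall's theorem for matchings from `S` into `T`. -/
theorem exists_isMatchingInto_iff (G : SimpleGraph V) [DecidableRel G.Adj] (S T : Finset V) :
    (∃ f, IsMatchingInto G S T f) ↔ ∀ B ⊆ S, B.card ≤ (nbhd G B ∩ T).card := by
  refine ⟨fun ⟨f, hf⟩ B hB => (hf.mono hB).card_le, fun hall => ?_⟩
  let t : S → Finset V := fun u => T.filter (G.Adj u)
  have hall' : ∀ s : Finset S, s.card ≤ (s.biUnion t).card := by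
    intro s
    have hsub : nbhd G (s.map (Function.Embedding.subtype _)) ∩ T ⊆ s.biUnion t := by
      simp only [subset_iff, mem_inter, mem_nbhd, mem_map, mem_biUnion, mem_filter, t]
      rintro w ⟨⟨_, ⟨u, hu, rfl⟩, hadj⟩, hw⟩
      exact ⟨u, hu, hw, hadj.symm⟩
    calc s.card = (s.map (Function.Embedding.subtype _)).card := (card_map _).symm
      _ ≤ _ := hall _ (by simp +contextual [subset_iff])
      _ ≤ (s.biUnion t).card := card_le_card hsub
  obtain ⟨f, hinj, hft⟩ := (all_card_le_biUnion_card_iff_exists_injective t).mp hall'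
  refine ⟨fun x => if hx : x ∈ S then f ⟨x, hx⟩ else x, fun x hx y hy hxy => ?_, fun u hu => ?_⟩
  · simp only [mem_coe] at hx hy
    simp only [dif_pos hx, dif_pos hy] at hxy
    exact congrArg Subtype.val (hinj hxy)
  · simpa [hu, t] using hft ⟨u, hu⟩

/-- Deleting `N(B)` from `A` removes `|N(B) ∩ A|` vertices and at least the `|B|` neighbours in
`B`, and by criticality the difference cannot grow. -/
lemma IsCritIndep.card_le_card_nbhd_inter {G : SimpleGraph V} [DecidableRel G.Adj]
    {A B : Finset V} (hA : IsCritIndep G A) (hB : B ⊆ nbhd G A) :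
    B.card ≤ (nbhd G B ∩ A).card := by
  have hindep : IsIndep G (A \ nbhd G B) := fun u hu w hw =>
    hA.1 u (mem_sdiff.mp hu).1 w (mem_sdiff.mp hw).1
  have hdiff : diff G (A \ nbhd G B) ≤ diff G A := hA.2 _ hindep
  have hcard : (A \ nbhd G B).card = A.card - (nbhd G B ∩ A).card := by
    rw [← card_sdiff_of_subset inter_subset_right, sdiff_inter_self_right]
  have hnbhd : nbhd G (A \ nbhd G B) ⊆ nbhd G A \ B := by
    simp only [subset_iff, mem_nbhd, mem_sdiff]
    rintro u ⟨x, ⟨hxA, hxB⟩, hadj⟩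
    exact ⟨⟨x, hxA, hadj⟩, fun hu => hxB ⟨u, hu, hadj.symm⟩⟩
  have hnbhd_card := card_le_card hnbhd
  rw [card_sdiff_of_subset hB] at hnbhd_card
  have hinter_le : (nbhd G B ∩ A).card ≤ A.card := card_le_card inter_subset_right
  have hB_le : B.card ≤ (nbhd G A).card := card_le_card hB
  unfold diff at hdiff
  omega

lemma IsCritIndep.not_exists_tight_iff {G : SimpleGraph V} [DecidableRel G.Adj] {A : Finset V}
    (hA : IsCritIndep G A) :
    (¬ ∃ B : Finset V, B ⊆ nbhd G A ∧ B.Nonempty ∧ (nbhd G B ∩ A).card = B.card) ↔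
      ∀ v ∈ A, ∀ B ⊆ nbhd G A, B.card ≤ (nbhd G B ∩ (A \ {v})).card := by
  simp only [sdiff_singleton_eq_erase, inter_erase]
  constructor
  · intro hnone v _ B hB
    obtain rfl | hne := B.eq_empty_or_nonempty
    · simp
    have hhall := hA.card_le_card_nbhd_inter hB
    have hnot_tight : (nbhd G B ∩ A).card ≠ B.card := fun h => hnone ⟨B, hB, hne, h⟩
    have herase := pred_card_le_card_erase (s := nbhd G B ∩ A) (a := v)
    omega
  · rintro hall ⟨B, hB, ⟨b, hb⟩, htight⟩
    obtain ⟨a, ha, hab⟩ := mem_nbhd.mp (hB hb)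
    have hhall := hall a ha B hB
    rw [card_erase_of_mem (mem_inter.mpr ⟨mem_nbhd.mpr ⟨b, hb, hab.symm⟩, ha⟩), htight] at hhall
    have hpos := card_pos.mpr ⟨b, hb⟩
    omega

/-- For a critical independent set `A`: there is no nonempty `B ⊆ N(A)` with
`|N(B) ∩ A| = |B|` iff for each `v ∈ A` there is a matching from `N(A)` into `A \ {v}`. -/
theorem no_tight_set_iff_matching_avoiding_each_vertex (G : SimpleGraph V)
    [DecidableRel G.Adj] (A : Finset V) (hA : IsCritIndep G A) :
    (¬ ∃ B : Finset V, B ⊆ nbhd G A ∧ B.Nonempty ∧ (nbhd G B ∩ A).card = B.card) ↔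
      ∀ v ∈ A, ∃ f : V → V, Set.InjOn f ↑(nbhd G A) ∧
        ∀ u ∈ nbhd G A, f u ∈ A \ {v} ∧ G.Adj u (f u) := by
  rw [hA.not_exists_tight_iff]
  exact forall₂_congr fun v _ => (exists_isMatchingInto_iff G _ _).symm

end CritGraph
end

section
/- Let G be a finite simple graph. If S₀ is an inclusion-minimal independent set with d(S₀) > 0, then d(S₀) = 1. -/
/-!
Deleting a vertex `v` from `S₀` lowers `|S₀|` by one and cannot enlarge the neighbourhood, so
`d(S₀) ≤ d(S₀ \ {v}) + 1`; by minimality `S₀ \ {v}` has `d ≤ 0`.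
-/

open Finset

namespace CritGraph

variable {V : Type*} [Fintype V] [DecidableEq V]

section

variable {G : SimpleGraph V} [DecidableRel G.Adj]

omit [DecidableEq V] in
theorem nbhd_empty : nbhd G ∅ = ∅ := by
  simp [nbhd]

omit [DecidableEq V] in
theorem nonempty_of_diff_pos {X : Finset V} (hX : 0 < diff G X) : X.Nonempty := by
  rw [nonempty_iff_ne_empty]
  rintro rfl
  simp [diff, nbhd_empty] at hX

omit [DecidableEq V] in
theorem nbhd_mono {X Y : Finset V} (h : X ⊆ Y) : nbhd G X ⊆ nbhd G Y :=
  monotone_filter_right _ fun _ _ ⟨x, hx, hadj⟩ => ⟨x, h hx, hadj⟩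

theorem diff_le_diff_erase_add_one {X : Finset V} {v : V} (hv : v ∈ X) :
    diff G X ≤ diff G (X.erase v) + 1 := by
  have hcard : (X.erase v).card + 1 = X.card := card_erase_add_one hv
  have hnbhd : (nbhd G (X.erase v)).card ≤ (nbhd G X).card :=
    card_le_card (nbhd_mono (erase_subset v X))
  simp only [diff]
  omega

omit [Fintype V] [DecidableEq V] [DecidableRel G.Adj] in
theorem IsIndep.mono {S T : Finset V} (hS : IsIndep G S) (hTS : T ⊆ S) : IsIndep G T :=
  fun u hu w hw => hS u (hTS hu) w (hTS hw)

theorem MinPosIndep.diff_erase_nonpos {S : Finset V} (hS : MinPosIndep G S) {v : V}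
    (hv : v ∈ S) : diff G (S.erase v) ≤ 0 :=
  not_lt.mp fun hpos => hS.2.2 _ (erase_ssubset hv) ⟨hS.1.mono (erase_subset v S), hpos⟩

end

/-- An inclusion-minimal independent set with positive difference has difference
exactly `1`. -/
theorem diff_eq_one_of_minPosIndep (G : SimpleGraph V) [DecidableRel G.Adj]
    (S₀ : Finset V) (hS : MinPosIndep G S₀) : diff G S₀ = 1 := by
  have hpos : 0 < diff G S₀ := hS.2.1
  obtain ⟨v, hv⟩ := nonempty_of_diff_pos hpos
  have hdrop : diff G S₀ ≤ diff G (S₀.erase v) + 1 := diff_le_diff_erase_add_one hv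
  have herase : diff G (S₀.erase v) ≤ 0 := hS.diff_erase_nonpos hv
  omega

end CritGraph
end
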